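/- arXiv:2210.14206 — 2 statements merged into one kernel-verified Lean document; each statement's English description precedes it below -/
import Mathlib

section
/- In a flattened parking function, every run except possibly the last run has length at least 2. -/
namespace FlatPF

/-- Decomposition of a word into maximal weakly increasing runs. -/
def runs : List ℕ → List (List ℕ)
  | [] => []
  | a :: l =>
    match runs l with
    | [] => [[a]]
    | [] :: rs => [a] :: rs
    | (b :: t) :: rs => if a ≤ b then (a :: b :: t) :: rs else [a] :: (b :: t) :: rs

/-- The number of maximal weakly increasing runs of a word. -/
def numRuns (w : List ℕ) : ℕ := (runs w).length

/-- A word is flattened if the leading values of its runs are weakly increasing. -/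
def IsFlattened (w : List ℕ) : Prop :=
  List.Chain' (· ≤ ·) ((runs w).map (fun r => r.headD 0))

/-- A word is a parking function: entries in `[m]` and the weakly increasing
rearrangement `(a'_1, …, a'_m)` satisfies `a'_i ≤ i`. -/
def IsPF (w : List ℕ) : Prop :=
  (∀ x ∈ w, 1 ≤ x ∧ x ≤ w.length) ∧
  ∀ i < w.length, (w.mergeSort (· ≤ ·)).getD i 0 ≤ i + 1

/-- `w` is obtained by inserting the elements of the multiset `S` into some
permutation of `[n]`, keeping the letters of the permutation in relative order. -/
def IsInsertion (S : Multiset ℕ) (n : ℕ) (w : List ℕ) : Prop :=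
  (↑w : Multiset ℕ) = ↑(List.range' 1 n) + S ∧
  ∃ p : List ℕ, p.Perm (List.range' 1 n) ∧ p.Sublist w

/-- Flattened `S`-insertion parking functions of order `n`. -/
def flatIns (S : Multiset ℕ) (n : ℕ) : Set (List ℕ) :=
  {w | IsInsertion S n w ∧ IsFlattened w}

/-- Flattened `S`-insertion parking functions of order `n` with exactly `k` runs. -/
def flatInsK (S : Multiset ℕ) (n k : ℕ) : Set (List ℕ) :=
  {w | IsInsertion S n w ∧ IsFlattened w ∧ numRuns w = k}

/-- `f(S; n, k)`, the number of flattened `S`-insertion parking functions of order `n`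
with exactly `k` runs.  In particular `fS 0 n k` is the number of flattened
permutations of `[n]` with `k` runs. -/
noncomputable def fS (S : Multiset ℕ) (n k : ℕ) : ℕ := (flatInsK S n k).ncard

end FlatPF

namespace FlatPF

theorem nil_not_mem_runs (w : List ℕ) : [] ∉ runs w := by
  induction w with
  | nil => simp [runs]
  | cons a l ih =>
    rcases h : runs l with _ | ⟨_ | ⟨b, t⟩, rs⟩
    · simp [runs, h]
    · exact absurd (h ▸ List.mem_cons_self) ih
    · rw [h] at ih
      simp only [runs, h]
      split <;> simp_all

theorem getElem_runs_ne_nil (w : List ℕ) (i : ℕ) (hi : i < (runs w).length) :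
    (runs w)[i] ≠ [] :=
  fun h ↦ nil_not_mem_runs w (h ▸ List.getElem_mem hi)

/-- Each run ends strictly above the first letter of the next one: otherwise the two runs
would form a single weakly increasing run. -/
theorem isChain_runs (w : List ℕ) :
    List.IsChain (fun r s : List ℕ => ∀ x ∈ r.getLast?, ∀ y ∈ s.head?, y < x) (runs w) := by
  induction w with
  | nil => simp [runs]
  | cons a l ih =>
    rcases h : runs l with _ | ⟨_ | ⟨b, t⟩, rs⟩
    · simp [runs, h]
    · exact absurd (h ▸ List.mem_cons_self) (nil_not_mem_runs l)
    · rw [h, List.isChain_cons] at ih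
      simp only [runs, h]
      split
      · exact List.isChain_cons.mpr ⟨fun s hs x hx ↦ ih.1 s hs x (by simpa using hx), ih.2⟩
      · refine List.isChain_cons.mpr ⟨?_, List.isChain_cons.mpr ih⟩
        simp only [List.head?_cons, List.getLast?_singleton, Option.mem_def, Option.some.injEq,
          forall_eq']
        omega

end FlatPF

open FlatPF in
theorem stmt3_general (w : List ℕ) (hfl : IsFlattened w) :
    ∀ i : ℕ, i + 1 < (runs w).length → 2 ≤ ((runs w).getD i []).length := by
  intro i hi
  rw [List.getD_eq_getElem _ _ (by omega)]
  by_contra! hlen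
  have hsingle : (runs w)[i].length = 1 := by
    have := List.length_pos_iff.mpr (getElem_runs_ne_nil w i (by omega))
    omega
  obtain ⟨x, hx⟩ := List.length_eq_one_iff.mp hsingle
  obtain ⟨y, s, hs⟩ := List.exists_cons_of_ne_nil (getElem_runs_ne_nil w (i + 1) hi)
  -- A singleton run starts where it ends, so descent and flatness clash at its boundary.
  have hdesc : y < x := by
    simpa [hx, hs] using List.isChain_iff_getElem.mp (isChain_runs w) i hi
  have hflat : x ≤ y := by
    simpa [hx, hs] using List.isChain_iff_getElem.mp (List.isChain_map _ |>.mp hfl) i (by simpa)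
  omega

open FlatPF in
/-- In a flattened parking function, every run except possibly the last has length
at least `2`. -/
theorem stmt3 (w : List ℕ) (hpf : IsPF w) (hfl : IsFlattened w) :
    ∀ i : ℕ, i + 1 < (runs w).length → 2 ≤ ((runs w).getD i []).length :=
  stmt3_general w hfl
end

section
/- Let S be a multiset with elements in [n]\{1}, and let S' = {s-1 : s in S} union {1}. Then the set of flattened S-insertion parking functions over permutations of [n] is in bijection with the set of flattened S'-insertion parking functions over permutations of [n-1]. Explicitly, the map sending a = a_1 a_2 ... a_{n+m} (where m = |S|) to b with b_1 = a_1 and b_i = a_i - 1 for 1 < i <= n+m is such a bijection. -/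
namespace FlatPF

theorem flatten_runs (l : List ℕ) : (runs l).flatten = l := by
  induction l with
  | nil => rfl
  | cons a l ih =>
    rcases h : runs l with _ | ⟨_ | ⟨b, t⟩, rs⟩ <;> simp only [runs, h] <;> rw [h] at ih
    · simp_all
    · simp_all
    · split <;> simp_all

theorem ne_nil_of_mem_runs {l r : List ℕ} (hr : r ∈ runs l) : r ≠ [] := by
  induction l generalizing r with
  | nil => simp [runs] at hr
  | cons a l ih =>
    rcases h : runs l with _ | ⟨_ | ⟨b, t⟩, rs⟩ <;> simp only [runs, h] at hr <;> rw [h] at ih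
    · simp_all
    · exact absurd rfl (ih List.mem_cons_self)
    · split at hr <;> simp only [List.mem_cons] at hr <;> aesop

theorem isChain_of_mem_runs {l r : List ℕ} (hr : r ∈ runs l) : r.IsChain (· ≤ ·) := by
  induction l generalizing r with
  | nil => simp [runs] at hr
  | cons a l ih =>
    rcases h : runs l with _ | ⟨_ | ⟨b, t⟩, rs⟩ <;> simp only [runs, h] at hr <;> rw [h] at ih
    · simp_all
    · exact absurd rfl (ne_nil_of_mem_runs (h ▸ List.mem_cons_self))
    · split at hr <;> simp only [List.mem_cons] at hr
      next hab =>
        rcases hr with rfl | hr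
        · exact List.isChain_cons_cons.mpr ⟨hab, ih List.mem_cons_self⟩
        · exact ih (List.mem_cons_of_mem _ hr)
      next =>
        rcases hr with rfl | hr
        · exact List.isChain_singleton a
        · exact ih (List.mem_cons.mpr hr)

theorem mem_of_mem_runs {l r : List ℕ} (hr : r ∈ runs l) {x : ℕ} (hx : x ∈ r) : x ∈ l :=
  flatten_runs l ▸ List.mem_flatten.mpr ⟨r, hr, hx⟩

theorem runs_map {f : ℕ → ℕ} (hf : StrictMono f) (l : List ℕ) :
    runs (l.map f) = (runs l).map (List.map f) := by
  induction l with
  | nil => rfl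
  | cons a l ih =>
    rcases h : runs l with _ | ⟨_ | ⟨b, t⟩, rs⟩ <;> simp only [List.map_cons, runs, ih, h]
    · rfl
    · rfl
    · simp only [hf.le_iff_le]
      split <;> rfl

theorem runs_cons_of_forall_le {a : ℕ} {l : List ℕ} (h : ∀ x ∈ l, a ≤ x) :
    runs (a :: l) = (a :: (runs l).headD []) :: (runs l).tail := by
  rcases hl : runs l with _ | ⟨_ | ⟨b, t⟩, rs⟩ <;> simp only [runs, hl]
  · rfl
  · exact absurd rfl (ne_nil_of_mem_runs (hl ▸ List.mem_cons_self))
  · rw [if_pos (h b (mem_of_mem_runs (hl ▸ List.mem_cons_self) List.mem_cons_self))]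
    rfl

theorem isFlattened_cons_iff {a : ℕ} {l : List ℕ} (h : ∀ x ∈ l, a ≤ x) :
    IsFlattened (a :: l) ↔ ((runs l).tail.map (·.headD 0)).IsChain (· ≤ ·) := by
  rw [IsFlattened, List.Chain', runs_cons_of_forall_le h, List.map_cons, List.headD_cons,
    List.isChain_cons, and_iff_right_iff_imp]
  intro _ y hy
  obtain ⟨r, hr, rfl⟩ := List.mem_map.mp (List.mem_of_mem_head? hy)
  obtain ⟨x, r, rfl⟩ := List.exists_cons_of_ne_nil (ne_nil_of_mem_runs (List.mem_of_mem_tail hr))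
  exact h x (mem_of_mem_runs (List.mem_of_mem_tail hr) List.mem_cons_self)

theorem isFlattened_map {f : ℕ → ℕ} (hf : StrictMono f) {l : List ℕ} :
    IsFlattened (l.map f) ↔ IsFlattened l := by
  have hhead : ∀ r ∈ runs l, (r.map f).headD 0 = f (r.headD 0) := by
    intro r hr
    obtain ⟨x, r, rfl⟩ := List.exists_cons_of_ne_nil (ne_nil_of_mem_runs hr)
    rfl
  rw [IsFlattened, IsFlattened, List.Chain', List.Chain', runs_map hf, List.map_map,
    List.map_congr_left (f := (·.headD 0) ∘ List.map f) hhead,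
    show (fun r : List ℕ => f (r.headD 0)) = f ∘ (·.headD 0) from rfl, ← List.map_map,
    List.isChain_map]
  simp only [hf.le_iff_le]

theorem headD_le_of_isChain {α : Type*} [Preorder α] {l : List α} (hl : l.IsChain (· ≤ ·))
    (d : α) {x : α} (hx : x ∈ l) : l.headD d ≤ x := by
  obtain ⟨y, l, rfl⟩ := List.exists_cons_of_ne_nil (List.ne_nil_of_mem hx)
  rcases List.mem_cons.mp hx with rfl | hx
  · exact le_rfl
  · exact List.rel_of_pairwise_cons (List.isChain_iff_pairwise.mp hl) hx

theorem headD_le_of_isFlattened {w : List ℕ} (hw : IsFlattened w) {x : ℕ} (hx : x ∈ w) :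
    w.headD 0 ≤ x := by
  obtain ⟨r, hr, hxr⟩ := List.mem_flatten.mp ((flatten_runs w).symm ▸ hx)
  obtain ⟨r₁, rs, hrw⟩ := List.exists_cons_of_ne_nil (List.ne_nil_of_mem hr)
  obtain ⟨y, r₁, rfl⟩ := List.exists_cons_of_ne_nil (ne_nil_of_mem_runs (hrw ▸ List.mem_cons_self))
  have hhead : w.headD 0 = ((runs w).map (·.headD 0)).headD 0 := by
    conv_lhs => rw [← flatten_runs w]
    rw [hrw]
    rfl
  calc w.headD 0 ≤ r.headD 0 := hhead ▸ headD_le_of_isChain hw 0 (List.mem_map_of_mem hr)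
    _ ≤ x := headD_le_of_isChain (isChain_of_mem_runs hr) 0 hxr

theorem eq_cons_tail_of_isFlattened {w : List ℕ} (hw : IsFlattened w) {a : ℕ} (ha : a ∈ w)
    (hmin : ∀ x ∈ w, a ≤ x) : w = a :: w.tail := by
  obtain ⟨y, t, rfl⟩ := List.exists_cons_of_ne_nil (List.ne_nil_of_mem ha)
  obtain rfl : y = a := le_antisymm (headD_le_of_isFlattened hw ha) (hmin y List.mem_cons_self)
  rfl

theorem isFlattened_one_cons_map_succ {u : List ℕ} (hu : ∀ x ∈ u, 1 ≤ x) :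
    IsFlattened (1 :: u.map (· + 1)) ↔ IsFlattened (1 :: u) := by
  change IsFlattened ((0 :: u).map (· + 1)) ↔ _
  rw [isFlattened_map (f := (· + 1)) (fun _ _ h => Nat.succ_lt_succ h),
    isFlattened_cons_iff (fun x _ => Nat.zero_le x), isFlattened_cons_iff hu]

theorem isInsertion_iff {S : Multiset ℕ} {n : ℕ} {w : List ℕ} :
    IsInsertion S n w ↔ (w : Multiset ℕ) = ↑(List.range' 1 n) + S :=
  ⟨And.left, fun hw => ⟨hw, Multiset.coe_le.mp (hw ▸ Multiset.le_add_right _ _)⟩⟩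

theorem mem_flatIns_iff {S : Multiset ℕ} {n : ℕ} {w : List ℕ} :
    w ∈ flatIns S n ↔ (w : Multiset ℕ) = ↑(List.range' 1 n) + S ∧ IsFlattened w :=
  and_congr_left' isInsertion_iff

theorem one_le_of_mem_flatIns {T : Multiset ℕ} (hT : ∀ s ∈ T, 1 ≤ s) {n : ℕ} {w : List ℕ}
    (hw : w ∈ flatIns T n) {x : ℕ} (hx : x ∈ w) : 1 ≤ x := by
  rw [← Multiset.mem_coe, (mem_flatIns_iff.mp hw).1, Multiset.mem_add] at hx
  rcases hx with hx | hx
  · exact (List.mem_range'_1.mp hx).1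
  · exact hT x hx

theorem eq_one_cons_tail_of_mem_flatIns {T : Multiset ℕ} (hT : ∀ s ∈ T, 1 ≤ s) {n : ℕ}
    (h1 : 1 ∈ (List.range' 1 n : Multiset ℕ) + T) {w : List ℕ} (hw : w ∈ flatIns T n) :
    w = 1 :: w.tail := by
  rw [← (mem_flatIns_iff.mp hw).1, Multiset.mem_coe] at h1
  exact eq_cons_tail_of_isFlattened (mem_flatIns_iff.mp hw).2 h1
    (fun _ hx => one_le_of_mem_flatIns hT hw hx)

theorem exists_eq_one_cons_map_succ_of_mem_flatIns {n : ℕ} (hn : 1 ≤ n) {S : Multiset ℕ}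
    (hS : ∀ s ∈ S, 1 ≤ s) {a : List ℕ} (ha : a ∈ flatIns S n) :
    ∃ u : List ℕ, a = 1 :: u.map (· + 1) := by
  refine ⟨a.tail.map (· - 1), ?_⟩
  rw [List.map_map, List.map_congr_left (f := (· + 1) ∘ (· - 1)) (g := id) fun x hx =>
    Nat.sub_add_cancel (one_le_of_mem_flatIns hS ha (List.mem_of_mem_tail hx)), List.map_id]
  exact eq_one_cons_tail_of_mem_flatIns hS (by simpa using .inl hn) ha

theorem range'_eq_cons_map_succ (s : ℕ) {n : ℕ} (hn : 1 ≤ n) :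
    List.range' s n = s :: (List.range' s (n - 1)).map (· + 1) := by
  obtain ⟨m, rfl⟩ := Nat.exists_eq_add_of_le' hn
  rw [List.range'_succ, ← List.range'_succ_left, Nat.add_sub_cancel]

theorem coe_cons_map_succ_eq_iff {n : ℕ} (hn : 1 ≤ n) {S : Multiset ℕ} (hS : ∀ s ∈ S, 1 ≤ s)
    {u : List ℕ} :
    ((1 :: u.map (· + 1) : List ℕ) : Multiset ℕ) = ↑(List.range' 1 n) + S ↔
      (u : Multiset ℕ) = (List.range' 1 (n - 1) : Multiset ℕ) + S.map (· - 1) := by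
  have hS' : S = (S.map (· - 1)).map (· + 1) := by
    rw [Multiset.map_map]
    conv_lhs => rw [← Multiset.map_id S]
    exact Multiset.map_congr rfl fun s hs => (Nat.sub_add_cancel (hS s hs)).symm
  conv_lhs => rw [hS', range'_eq_cons_map_succ 1 hn, ← Multiset.cons_coe, ← Multiset.cons_coe,
    Multiset.cons_add, Multiset.cons_inj_right, ← Multiset.map_coe, ← Multiset.map_coe,
    ← Multiset.map_add]
  exact (Multiset.map_injective (add_left_injective 1)).eq_iff

theorem coe_cons_eq_add_add_singleton_iff {α : Type*} {a : α} {u : List α} {M T : Multiset α} :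
    ((a :: u : List α) : Multiset α) = M + (T + {a}) ↔ (u : Multiset α) = M + T := by
  rw [← add_assoc, add_comm, Multiset.singleton_add, ← Multiset.cons_coe, Multiset.cons_inj_right]

theorem one_cons_map_succ_mem_flatIns_iff {n : ℕ} (hn : 1 ≤ n) {S : Multiset ℕ}
    (hS : ∀ s ∈ S, 2 ≤ s) {u : List ℕ} :
    1 :: u.map (· + 1) ∈ flatIns S n ↔ 1 :: u ∈ flatIns (S.map (· - 1) + {1}) (n - 1) := by
  rw [mem_flatIns_iff, mem_flatIns_iff, coe_cons_eq_add_add_singleton_iff,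
    coe_cons_map_succ_eq_iff hn fun s hs => one_le_two.trans (hS s hs)]
  refine and_congr_right fun hu => isFlattened_one_cons_map_succ fun x hx => ?_
  rw [← Multiset.mem_coe, hu, Multiset.mem_add, Multiset.mem_map] at hx
  rcases hx with hx | ⟨s, hs, rfl⟩
  · exact (List.mem_range'_1.mp hx).1
  · exact Nat.le_sub_of_add_le (hS s hs)

end FlatPF

open FlatPF in
/-- For `S` with elements in `[n] \ {1}` and `S' = {s - 1 : s ∈ S} ∪ {1}`, the map
sending `a₁a₂⋯` to `b` with `b₁ = a₁` and `bᵢ = aᵢ - 1` for `i > 1` is a bijection from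
the flattened `S`-insertion parking functions of order `n` onto the flattened
`S'`-insertion parking functions of order `n - 1`. -/
theorem stmt5 (n : ℕ) (hn : 1 ≤ n) (S : Multiset ℕ) (hS : ∀ s ∈ S, 2 ≤ s ∧ s ≤ n) :
    Set.BijOn
      (fun a : List ℕ => match a with
        | [] => []
        | x :: xs => x :: xs.map (· - 1))
      (flatIns S n) (flatIns (S.map (· - 1) + {1}) (n - 1)) := by
  have hS₂ : ∀ s ∈ S, 2 ≤ s := fun s hs => (hS s hs).1
  have hS₁ : ∀ s ∈ S, 1 ≤ s := fun s hs => one_le_two.trans (hS₂ s hs)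
  have hS₁' : ∀ s ∈ S.map (· - 1) + {1}, 1 ≤ s := by
    simp only [Multiset.mem_add, Multiset.mem_map, Multiset.mem_singleton]
    rintro _ (⟨s, hs, rfl⟩ | rfl)
    exacts [Nat.le_sub_of_add_le (hS₂ s hs), le_rfl]
  have hsource : ∀ a ∈ flatIns S n, ∃ u : List ℕ, a = 1 :: u.map (· + 1) := fun _ ha =>
    exists_eq_one_cons_map_succ_of_mem_flatIns hn hS₁ ha
  have htarget : ∀ b ∈ flatIns (S.map (· - 1) + {1}) (n - 1), ∃ u, b = 1 :: u := fun b hb =>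
    ⟨b.tail, eq_one_cons_tail_of_mem_flatIns hS₁' (by simp) hb⟩
  have hshift : ∀ u : List ℕ, (u.map (· + 1)).map (· - 1) = u := fun u => by
    simp [Function.comp_def]
  refine ⟨?_, ?_, ?_⟩
  · intro a ha
    obtain ⟨u, rfl⟩ := hsource a ha
    simpa only [hshift] using (one_cons_map_succ_mem_flatIns_iff hn hS₂).mp ha
  · intro a ha a' ha' h
    obtain ⟨u, rfl⟩ := hsource a ha
    obtain ⟨u', rfl⟩ := hsource a' ha'
    simp only [hshift, List.cons.injEq, true_and] at h
    rw [h]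
  · intro b hb
    obtain ⟨u, rfl⟩ := htarget b hb
    exact ⟨_, (one_cons_map_succ_mem_flatIns_iff hn hS₂).mpr hb, by simp only [hshift]⟩
end
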